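/- Let A be a PMV_f-algebra. Then (1) every ideal of the underlying MV-algebra of A is absorbent, hence is an ideal of the MVW-rig A (Id_W(A) = Id(A)); and (2) every prime ideal of the MVW-rig A is a prime ideal of the underlying MV-algebra (Spec_W(A) ⊆ Spec(A)). -/

import Mathlib

/-- The data of an MV-algebra: a binary sum, a negation and a zero. -/
structure MVData (A : Type*) where
  add : A → A → A
  neg : A → A
  zero : A

namespace MVData

variable {A : Type*} (m : MVData A)

/-- The top element `u = ¬0`. -/
def unit : A := m.neg m.zero

/-- Truncated difference `x ⊖ y = ¬(¬x ⊕ y)`. -/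
def ominus (x y : A) : A := m.neg (m.add (m.neg x) y)

/-- The product `x ⊙ y = ¬(¬x ⊕ ¬y)`. -/
def odot (x y : A) : A := m.neg (m.add (m.neg x) (m.neg y))

/-- The MV order: `x ≤ y` iff `x ⊖ y = 0`. -/
def le (x y : A) : Prop := m.ominus x y = m.zero

/-- The lattice join `x ∨ y = (x ⊖ y) ⊕ y`. -/
def sup (x y : A) : A := m.add (m.ominus x y) y

/-- The lattice meet `x ∧ y = ¬(¬x ∨ ¬y)`. -/
def inf (x y : A) : A := m.neg (m.sup (m.neg x) (m.neg y))

/-- The MV-algebra axioms: `(A, ⊕, 0)` is a commutative monoid and `¬` satisfies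
`¬¬x = x`, `x ⊕ ¬0 = ¬0` and `¬(¬x ⊕ y) ⊕ y = ¬(¬y ⊕ x) ⊕ x`. -/
structure IsMV : Prop where
  add_assoc : ∀ x y z : A, m.add (m.add x y) z = m.add x (m.add y z)
  add_comm : ∀ x y : A, m.add x y = m.add y x
  add_zero : ∀ x : A, m.add x m.zero = x
  neg_neg : ∀ x : A, m.neg (m.neg x) = x
  add_unit : ∀ x : A, m.add x (m.neg m.zero) = m.neg m.zero
  lukasiewicz : ∀ x y : A,
    m.add (m.neg (m.add (m.neg x) y)) y = m.add (m.neg (m.add (m.neg y) x)) x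

end MVData

/-!
The product of a `PMV_f`-algebra lies below the meet: `a · b ≤ a ⊓ b ≤ a`. Hence every downward
closed set absorbs products, and a prime rig ideal containing `a ⊓ b` contains `a · b`, hence `a`
or `b`.
-/

namespace MVData.IsMV

variable {A : Type*} {m : MVData A}

theorem neg_add_self (hmv : m.IsMV) (x : A) : m.add (m.neg x) x = m.neg m.zero := by
  have h := hmv.lukasiewicz x (m.neg m.zero)
  rw [hmv.add_unit, hmv.neg_neg, hmv.add_comm m.zero x, hmv.add_zero] at h
  exact h.symm

theorem zero_add (hmv : m.IsMV) (x : A) : m.add m.zero x = x := by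
  rw [hmv.add_comm, hmv.add_zero]

theorem le_add_left (hmv : m.IsMV) (w x : A) : m.le x (m.add w x) := by
  unfold MVData.le MVData.ominus
  rw [hmv.add_comm w x, ← hmv.add_assoc, hmv.neg_add_self, hmv.add_comm, hmv.add_unit,
    hmv.neg_neg]

theorem le_iff_exists_add (hmv : m.IsMV) (x y : A) : m.le x y ↔ ∃ w, y = m.add w x := by
  constructor
  · intro h
    refine ⟨m.ominus y x, ?_⟩
    have hl := hmv.lukasiewicz x y
    unfold MVData.le MVData.ominus at h
    rwa [h, hmv.zero_add] at hl
  · rintro ⟨w, rfl⟩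
    exact hmv.le_add_left w x

theorem le_trans (hmv : m.IsMV) {x y z : A} (hxy : m.le x y) (hyz : m.le y z) : m.le x z := by
  rw [hmv.le_iff_exists_add] at hxy hyz ⊢
  obtain ⟨v, rfl⟩ := hxy
  obtain ⟨w, rfl⟩ := hyz
  exact ⟨m.add w v, (hmv.add_assoc _ _ _).symm⟩

theorem neg_le_neg (hmv : m.IsMV) {x y : A} (h : m.le x y) : m.le (m.neg y) (m.neg x) := by
  unfold MVData.le MVData.ominus at h ⊢
  rwa [hmv.neg_neg, hmv.add_comm]

theorem inf_le_left (hmv : m.IsMV) (a b : A) : m.le (m.inf a b) a := by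
  have h : m.le (m.neg a) (m.sup (m.neg a) (m.neg b)) := by
    unfold MVData.sup MVData.ominus
    rw [hmv.lukasiewicz]
    exact hmv.le_add_left _ _
  simpa only [MVData.inf, hmv.neg_neg] using hmv.neg_le_neg h

theorem mul_le_left (hmv : m.IsMV) {mul : A → A → A}
    (mul_le_inf : ∀ a b : A, m.le (mul a b) (m.inf a b)) (a b : A) : m.le (mul a b) a :=
  hmv.le_trans (mul_le_inf a b) (hmv.inf_le_left a b)

end MVData.IsMV

theorem pmvf_ideals_and_spectra_general {A : Type*} (m : MVData A) (hmv : m.IsMV)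
    (mul : A → A → A)
    (mul_le_inf : ∀ a b : A, m.le (mul a b) (m.inf a b)) :
    (∀ I : Set A, I.Nonempty →
      (∀ a b : A, m.le a b → b ∈ I → a ∈ I) →
      (∀ a b : A, a ∈ I → b ∈ I → m.add a b ∈ I) →
      ∀ a b : A, a ∈ I → mul a b ∈ I) ∧
    (∀ P : Set A, P.Nonempty →
      (∀ a b : A, m.le a b → b ∈ P → a ∈ P) →
      (∀ a b : A, a ∈ P → b ∈ P → m.add a b ∈ P) →
      (∀ a b : A, a ∈ P → mul a b ∈ P) →
      (∀ a b : A, mul a b ∈ P → a ∈ P ∨ b ∈ P) →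
      ∀ a b : A, m.inf a b ∈ P → a ∈ P ∨ b ∈ P) := by
  refine ⟨?absorbent, ?prime⟩
  case absorbent =>
    intro I _ hdown _ a b ha
    exact hdown _ _ (hmv.mul_le_left mul_le_inf a b) ha
  case prime =>
    intro P _ hdown _ _ hprime a b hab
    exact hprime a b (hdown _ _ (mul_le_inf a b) hab)

/-- In a `PMV_f`-algebra `A`: (1) every ideal of the underlying
MV-algebra is absorbent, hence is an MVW-rig ideal (`Id_W(A) = Id(A)`); and (2) every
prime ideal of the MVW-rig `A` is a prime ideal of the underlying MV-algebra
(`Spec_W(A) ⊆ Spec(A)`). -/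
theorem pmvf_ideals_and_spectra {A : Type*} (m : MVData A) (hmv : m.IsMV)
    (mul : A → A → A)
    (mul_assoc : ∀ a b c : A, mul (mul a b) c = mul a (mul b c))
    (mul_comm : ∀ a b : A, mul a b = mul b a)
    (mul_zero : ∀ a : A, mul a m.zero = m.zero)
    (mul_add_le : ∀ a b c : A, m.le (mul a (m.add b c)) (m.add (mul a b) (mul a c)))
    (ominus_mul_le : ∀ a b c : A,
      m.le (m.ominus (mul a b) (mul a c)) (mul a (m.ominus b c)))
    (mul_le_inf : ∀ a b : A, m.le (mul a b) (m.inf a b))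
    (mul_ominus : ∀ a b c : A, mul a (m.ominus b c) = m.ominus (mul a b) (mul a c)) :
    (∀ I : Set A, I.Nonempty →
      (∀ a b : A, m.le a b → b ∈ I → a ∈ I) →
      (∀ a b : A, a ∈ I → b ∈ I → m.add a b ∈ I) →
      ∀ a b : A, a ∈ I → mul a b ∈ I) ∧
    (∀ P : Set A, P.Nonempty →
      (∀ a b : A, m.le a b → b ∈ P → a ∈ P) →
      (∀ a b : A, a ∈ P → b ∈ P → m.add a b ∈ P) →
      (∀ a b : A, a ∈ P → mul a b ∈ P) →
      (∀ a b : A, mul a b ∈ P → a ∈ P ∨ b ∈ P) →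
      ∀ a b : A, m.inf a b ∈ P → a ∈ P ∨ b ∈ P) :=
  pmvf_ideals_and_spectra_general m hmv mul mul_le_inf
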